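/- arXiv:2406.07350 — 5 statements merged into one kernel-verified Lean document; each statement's English description precedes it below -/
import Mathlib

section
/- With the basis e_{i,s}^{j,t} of gl(V) defined by e_{i,s}^{j,t} f^p w_k = δ_{i,k} δ_{s,p} f^t w_j, and η_{i≤i'}(s) = (−1)^s if i ≤ i' and ε(−1)^{s'} if i > i' (where s' = λ_i − 1 − s), the involution σ(X) = −J⁻¹XᵀJ satisfies σ(e_{i,s}^{j,t}) = −ε · η_{j≤j'}(t) · η_{i'≤i}(s') · e_{j',t'}^{i',s'}. -/
open Matrix

/-- Boxes of the pyramid of the partition `lam`: in row `i` there are `lam i` boxes. -/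
abbrev Box {n : ℕ} (lam : Fin n → ℕ) := Σ i : Fin n, Fin (lam i)

/-- `eMat a b` is the matrix of the elementary operator `e_a^b` sending the basis
vector indexed by `a` to the one indexed by `b` (so `e_{i,s}^{j,t} = eMat ⟨i,s⟩ ⟨j,t⟩`,
`e_{i,s}^{j,t} f^p w_k = δ_{ik} δ_{sp} f^t w_j`). -/
noncomputable def eMat {n : ℕ} {lam : Fin n → ℕ} (a b : Box lam) :
    Matrix (Box lam) (Box lam) ℂ :=
  Matrix.single b a 1

/-- The sign `η_{i ≤ i'}(s)`: equal to `(−1)^s` if `i ≤ i'` and to `ε(−1)^{s'}`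
(`s' = λ_i − 1 − s`) if `i > i'`. -/
noncomputable def eta {n : ℕ} (lam : Fin n → ℕ) (pr : Fin n → Fin n) (ε : ℂ)
    (i : Fin n) (s : ℕ) : ℂ :=
  if i ≤ pr i then (-1 : ℂ) ^ s else ε * (-1 : ℂ) ^ (lam i - 1 - s)

/-- The Gram matrix `J` of the form, characterized by
`J f^{s'} w_{i'} = η_{i≤i'}(s) f^s w_i`; here `π : Box lam ≃ Box lam` is the involution
`⟨i,s⟩ ↦ ⟨i', s'⟩` of boxes. -/
noncomputable def Jmat {n : ℕ} {lam : Fin n → ℕ} (pr : Fin n → Fin n) (ε : ℂ)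
    (π : Box lam ≃ Box lam) : Matrix (Box lam) (Box lam) ℂ :=
  ∑ a : Box lam, eta lam pr ε a.1 (a.2 : ℕ) • Matrix.single a (π a) 1

/-- The involution `σ(X) = −J⁻¹ Xᵀ J` of `gl(V)`; its fixed algebra is `so(V)` (`ε = 1`)
or `sp(V)` (`ε = −1`). -/
noncomputable def sigmaM {n : ℕ} {lam : Fin n → ℕ} (pr : Fin n → Fin n) (ε : ℂ)
    (π : Box lam ≃ Box lam) (X : Matrix (Box lam) (Box lam) ℂ) :
    Matrix (Box lam) (Box lam) ℂ :=
  -((Jmat pr ε π)⁻¹ * Xᵀ * (Jmat pr ε π))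

/-- The elements `f_{i,s}^{j,t} = e_{i,s}^{j,t} + σ(e_{i,s}^{j,t})` of the classical
Lie algebra, indexed by boxes `a = ⟨i,s⟩`, `b = ⟨j,t⟩`. -/
noncomputable def fEl {n : ℕ} {lam : Fin n → ℕ} (pr : Fin n → Fin n) (ε : ℂ)
    (π : Box lam ≃ Box lam) (a b : Box lam) : Matrix (Box lam) (Box lam) ℂ :=
  eMat a b + sigmaM pr ε π (eMat a b)

/-! `J = ∑ₐ η(a) E_{a,πa}` is a monomial matrix, and conjugating a matrix unit `E_{a,b}` by a
monomial matrix with weights `d` gives `d(a)⁻¹ d(b) E_{πa,πb}`. For `J` the weights satisfy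
`η(a)⁻¹ = ε η(πa)`: a case check on `i < i'`, `i = i'`, `i > i'`, using `ε² = 1` and, on the
fixed rows of the involution, `ε (−1)^{λᵢ} = −1`. -/

namespace Matrix

variable {ι K : Type*} [Fintype ι] [DecidableEq ι]

section CommSemiring

variable [CommSemiring K]

noncomputable def monomialMatrix (π : ι ≃ ι) (d : ι → K) : Matrix ι ι K :=
  ∑ c, d c • single c (π c) 1

theorem single_mul_monomialMatrix (π : ι ≃ ι) (d : ι → K) (a b : ι) :
    single a b 1 * monomialMatrix π d = d b • single a (π b) 1 := by
  rw [monomialMatrix, Matrix.mul_sum, Finset.sum_eq_single b]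
  · simp
  · intro c _ hcb
    simp [Ne.symm hcb]
  · simp

theorem monomialMatrix_mul_single (π : ι ≃ ι) (d : ι → K) (a b : ι) :
    monomialMatrix π d * single (π a) b 1 = d a • single a b 1 := by
  rw [monomialMatrix, Matrix.sum_mul, Finset.sum_eq_single a]
  · simp
  · intro c _ hca
    simp [π.injective.ne hca]
  · simp

theorem monomialMatrix_mul_monomialMatrix (π ρ : ι ≃ ι) (d e : ι → K) :
    monomialMatrix π d * monomialMatrix ρ e =
      monomialMatrix (π.trans ρ) (fun c => d c * e (π c)) := by
  simp only [monomialMatrix.eq_1 π d, Matrix.sum_mul, smul_mul_assoc, single_mul_monomialMatrix,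
    smul_smul]
  rfl

theorem monomialMatrix_refl_one : monomialMatrix (Equiv.refl ι) (1 : ι → K) = 1 := by
  simp [monomialMatrix, sum_single_one]

end CommSemiring

variable [Field K]

theorem monomialMatrix_mul_monomialMatrix_symm (π : ι ≃ ι) {d : ι → K} (hd : ∀ c, d c ≠ 0) :
    monomialMatrix π d * monomialMatrix π.symm (fun c => (d (π.symm c))⁻¹) = 1 := by
  rw [monomialMatrix_mul_monomialMatrix, Equiv.self_trans_symm, ← monomialMatrix_refl_one]
  congr 1
  funext c
  simp [hd c]

theorem inv_monomialMatrix (π : ι ≃ ι) {d : ι → K} (hd : ∀ c, d c ≠ 0) :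
    (monomialMatrix π d)⁻¹ = monomialMatrix π.symm (fun c => (d (π.symm c))⁻¹) :=
  inv_eq_right_inv (monomialMatrix_mul_monomialMatrix_symm π hd)

theorem inv_monomialMatrix_mul_single_mul_monomialMatrix (π : ι ≃ ι) {d : ι → K}
    (hd : ∀ c, d c ≠ 0) (a b : ι) :
    (monomialMatrix π d)⁻¹ * single a b 1 * monomialMatrix π d =
      ((d a)⁻¹ * d b) • single (π a) (π b) 1 := by
  have hM : (monomialMatrix π d)⁻¹ * monomialMatrix π d = 1 := by
    rw [inv_monomialMatrix π hd]
    exact mul_eq_one_comm.mp (monomialMatrix_mul_monomialMatrix_symm π hd)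
  have hcomm : single a b 1 * monomialMatrix π d =
      monomialMatrix π d * (((d a)⁻¹ * d b) • single (π a) (π b) 1) := by
    rw [single_mul_monomialMatrix, Matrix.mul_smul, monomialMatrix_mul_single, smul_smul,
      mul_right_comm, inv_mul_cancel₀ (hd a), one_mul]
  rw [Matrix.mul_assoc, hcomm, ← Matrix.mul_assoc, hM, Matrix.one_mul]

end Matrix

theorem eta_mul_eta_pr {n : ℕ} {lam : Fin n → ℕ} {pr : Fin n → Fin n} {ε : ℂ}
    (hε : ε = 1 ∨ ε = -1) (hpr : ∀ i, pr (pr i) = i) (hlampr : ∀ i, lam (pr i) = lam i)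
    (hfix : ∀ i, pr i = i ↔ ε * (-1 : ℂ) ^ (lam i) = -1) {i : Fin n} {s : ℕ} (hs : s < lam i) :
    eta lam pr ε i s * (ε * eta lam pr ε (pr i) (lam i - 1 - s)) = 1 := by
  have hε2 : ε * ε = 1 := by rcases hε with rfl | rfl <;> norm_num
  have hsq (k : ℕ) : (-1 : ℂ) ^ k * (-1) ^ k = 1 := by rw [← mul_pow]; norm_num
  rcases lt_trichotomy i (pr i) with h | h | h
  · have h' : ¬ pr i ≤ pr (pr i) := by rw [hpr]; exact not_le.2 h
    have hs' : lam i - 1 - (lam i - 1 - s) = s := by omega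
    simp only [eta, if_pos h.le, if_neg h', hlampr, hs']
    linear_combination ((-1 : ℂ) ^ s * (-1) ^ s) * hε2 + hsq s
  · have hsplit : (-1 : ℂ) ^ s * (-1) ^ (lam i - 1 - s) * (-1) = (-1) ^ lam i := by
      rw [← pow_add, ← pow_succ]
      congr 1
      omega
    simp only [eta, ← h, le_refl, if_true]
    linear_combination -(hfix i).1 h.symm - ε * hsplit
  · have h' : pr i ≤ pr (pr i) := by rw [hpr]; exact h.le
    simp only [eta, if_neg (not_le.2 h), if_pos h']
    linear_combination
      ((-1 : ℂ) ^ (lam i - 1 - s) * (-1) ^ (lam i - 1 - s)) * hε2 + hsq (lam i - 1 - s)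

theorem sigma_of_elementary_general
    (n : ℕ) (lam : Fin n → ℕ)
    (ε : ℂ) (hε : ε = 1 ∨ ε = -1)
    (pr : Fin n → Fin n) (hpr : ∀ i, pr (pr i) = i)
    (hlampr : ∀ i, lam (pr i) = lam i)
    (hfix : ∀ i, pr i = i ↔ ε * (-1 : ℂ) ^ (lam i) = -1)
    (π : Box lam ≃ Box lam)
    (hπ1 : ∀ a : Box lam, (π a).1 = pr a.1)
    (hπ2 : ∀ a : Box lam, ((π a).2 : ℕ) = lam a.1 - 1 - (a.2 : ℕ)) :
    ∀ a b : Box lam,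
      sigmaM pr ε π (eMat a b) =
        (-(ε * eta lam pr ε b.1 (b.2 : ℕ) * eta lam pr ε (π a).1 ((π a).2 : ℕ))) •
          eMat (π b) (π a) := by
  intro a b
  set η : Box lam → ℂ := fun c => eta lam pr ε c.1 c.2
  have hJ : Jmat pr ε π = monomialMatrix π η := rfl
  have hpair (c : Box lam) : η c * (ε * η (π c)) = 1 := by
    simp only [η, hπ1, hπ2]
    exact eta_mul_eta_pr hε hpr hlampr hfix c.2.isLt
  have hne (c : Box lam) : η c ≠ 0 := left_ne_zero_of_mul_eq_one (hpair c)
  rw [sigmaM, eMat, transpose_single, hJ,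
    inv_monomialMatrix_mul_single_mul_monomialMatrix π hne, inv_eq_of_mul_eq_one_right (hpair a),
    eMat, ← neg_smul]
  congr 2
  ring

/-- `σ(e_{i,s}^{j,t}) = −ε η_{j≤j'}(t) η_{i'≤i}(s') e_{j',t'}^{i',s'}`. -/
theorem sigma_of_elementary
    (n : ℕ) (lam : Fin n → ℕ) (hlam : Antitone lam) (hpos : ∀ i, 0 < lam i)
    (ε : ℂ) (hε : ε = 1 ∨ ε = -1)
    (pr : Fin n → Fin n) (hpr : ∀ i, pr (pr i) = i)
    (hlampr : ∀ i, lam (pr i) = lam i)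
    (hfix : ∀ i, pr i = i ↔ ε * (-1 : ℂ) ^ (lam i) = -1)
    (π : Box lam ≃ Box lam)
    (hπ1 : ∀ a : Box lam, (π a).1 = pr a.1)
    (hπ2 : ∀ a : Box lam, ((π a).2 : ℕ) = lam a.1 - 1 - (a.2 : ℕ)) :
    ∀ a b : Box lam,
      sigmaM pr ε π (eMat a b) =
        (-(ε * eta lam pr ε b.1 (b.2 : ℕ) * eta lam pr ε (π a).1 ((π a).2 : ℕ))) •
          eMat (π b) (π a) :=
  sigma_of_elementary_general n lam ε hε pr hpr hlampr hfix π hπ1 hπ2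
end

section
/- For the elements f_{i,s}^{j,t} = e_{i,s}^{j,t} + σ(e_{i,s}^{j,t}) of g, the Lie bracket satisfies: [f_{i,s}^{j,t}, f_{k,p}^{l,q}] = δ_{i,l} δ_{s,q} f_{k,p}^{j,t} − δ_{k,j} δ_{p,t} f_{i,s}^{l,q} − δ_{i,k'} δ_{s,p'} ε η_{l≤l'}(q) η_{i≤i'}(s) f_{l',q'}^{j,t} + δ_{l',j} δ_{q',t} ε η_{l≤l'}(q) η_{k'≤k}(p') f_{i,s}^{k',p'}. -/
open Matrix

/-!
The involution `σ X = -J⁻¹ Xᵀ J` preserves brackets (transposition reverses them and conjugation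
by `J` preserves them), and `σ² = 1` on elementary matrices. Hence for `e = e_{i,s}^{j,t}` and
`e' = e_{k,p}^{l,q}`,
`⁅e + σ e, e' + σ e'⁆ = (1 + σ) ⁅e, e'⁆ + (1 + σ) ⁅e, σ e'⁆`.
Since `J` is a signed permutation matrix with `J² = ε`, `σ e_a^b = -η_a η_b e_{π b}^{π a}`, and the
two brackets of elementary matrices give the four terms once `η_{π a} = ε η_a` is used.
-/

section ClassicalLieAlgebra

attribute [local instance] LieRing.ofAssociativeRing LieAlgebra.ofAssociativeAlgebra

theorem Matrix.neg_conj_transpose_lie {ι R : Type*} [Fintype ι] [DecidableEq ι] [CommRing R]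
    {J : Matrix ι ι R} (hJ : IsUnit J.det) (X Y : Matrix ι ι R) :
    -(J⁻¹ * ⁅X, Y⁆ᵀ * J) = ⁅-(J⁻¹ * Xᵀ * J), -(J⁻¹ * Yᵀ * J)⁆ := by
  let hJ' := J.invertibleOfIsUnitDet hJ
  rw [neg_lie, lie_neg, neg_neg, lie_transpose, ← lie_skew, ← lieConj_symm_apply _ _ hJ',
    ← lieConj_symm_apply _ _ hJ', ← lieConj_symm_apply _ _ hJ', map_neg, neg_neg,
    LieEquiv.map_lie]

variable {n : ℕ} {lam : Fin n → ℕ} {pr : Fin n → Fin n} {ε : ℂ} {π : Box lam ≃ Box lam}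

theorem Box.ext {a b : Box lam} (h₁ : a.1 = b.1) (h₂ : (a.2 : ℕ) = b.2) : a = b := by
  obtain ⟨i, s⟩ := a
  obtain ⟨j, t⟩ := b
  dsimp only at h₁ h₂
  subst h₁
  rw [Fin.ext h₂]

theorem involutive_of_pr (hpr : ∀ i, pr (pr i) = i)
    (hlampr : ∀ i, lam (pr i) = lam i) (hπ₁ : ∀ a : Box lam, (π a).1 = pr a.1)
    (hπ₂ : ∀ a : Box lam, ((π a).2 : ℕ) = lam a.1 - 1 - a.2) :
    Function.Involutive π := fun a =>
  Box.ext (by rw [hπ₁, hπ₁, hpr]) (by rw [hπ₂, hπ₂, hπ₁, hlampr]; have := a.2.isLt; omega)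

theorem eMat_mul_eMat (a b c d : Box lam) :
    eMat a b * eMat c d = if a = d then eMat c b else 0 := by
  split_ifs with h
  · rw [h, eMat, eMat, single_mul_single_same, mul_one, eMat]
  · exact single_mul_single_of_ne (h := h) ..

theorem eMat_lie (a b c d : Box lam) :
    ⁅eMat a b, eMat c d⁆ =
      (if a = d then (1 : ℂ) else 0) • eMat c b - (if c = b then (1 : ℂ) else 0) • eMat a d := by
  rw [Ring.lie_def, eMat_mul_eMat, eMat_mul_eMat, ite_smul, ite_smul, one_smul, one_smul,
    zero_smul, zero_smul]

theorem eta_mul_self (hε : ε * ε = 1) (i : Fin n) (s : ℕ) :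
    eta lam pr ε i s * eta lam pr ε i s = 1 := by
  unfold eta
  split_ifs
  · exact pow_mul_pow_eq_one s (by norm_num)
  · linear_combination
      (ε * ε) * pow_mul_pow_eq_one (lam i - 1 - s) (by norm_num : (-1 : ℂ) * -1 = 1) + hε

/-- The identity `η_{i≤i'}(s) η_{i'≤i}(s') = ε`, solved for the second factor using `η² = 1`. -/
theorem eta_pr_sub (hε : ε * ε = 1) {i : Fin n} (hpr : pr (pr i) = i)
    (hlampr : lam (pr i) = lam i) (hfix : pr i = i ↔ ε * (-1 : ℂ) ^ lam i = -1)
    {s : ℕ} (hs : s < lam i) :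
    eta lam pr ε (pr i) (lam i - 1 - s) = ε * eta lam pr ε i s := by
  unfold eta
  rw [hpr, hlampr, show lam i - 1 - (lam i - 1 - s) = s by omega]
  rcases lt_trichotomy i (pr i) with h | h | h
  · rw [if_pos h.le, if_neg (not_le.2 h)]
  · have hL := hfix.1 h.symm
    rw [show lam i = lam i - 1 - s + s + 1 by omega, pow_succ, pow_add] at hL
    rw [← h, if_pos le_rfl, if_pos le_rfl]
    linear_combination (-ε * (-1) ^ s) * hL
      - ((-1) ^ (lam i - 1 - s) * (-1) ^ s * (-1) ^ s) * hε
      - (-1) ^ (lam i - 1 - s) * pow_mul_pow_eq_one s (by norm_num : (-1 : ℂ) * -1 = 1)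
  · rw [if_neg (not_le.2 h), if_pos h.le]
    linear_combination (-(-1 : ℂ) ^ (lam i - 1 - s)) * hε

theorem Jmat_mul_single (hπ : Function.Involutive π) (a b : Box lam) :
    Jmat pr ε π * single a b 1 =
      eta lam pr ε (π a).1 (π a).2 • single (π a) b 1 := by
  rw [Jmat, Finset.sum_mul, Finset.sum_eq_single (π a)]
  · rw [smul_mul_assoc, hπ a, single_mul_single_same, mul_one]
  · intro x _ hx
    rw [smul_mul_assoc, single_mul_single_of_ne (h := fun h => hx (by rw [← h, hπ])),
      smul_zero]
  · exact fun h => absurd (Finset.mem_univ _) h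

theorem single_mul_Jmat (a b : Box lam) :
    single a b 1 * Jmat pr ε π = eta lam pr ε b.1 b.2 • single a (π b) 1 := by
  rw [Jmat, Finset.mul_sum, Finset.sum_eq_single b]
  · rw [mul_smul_comm, single_mul_single_same, mul_one]
  · intro x _ hx
    rw [mul_smul_comm, single_mul_single_of_ne (h := Ne.symm hx), smul_zero]
  · exact fun h => absurd (Finset.mem_univ _) h

theorem Jmat_mul_Jmat (hε : ε * ε = 1) (hπ : Function.Involutive π)
    (hη : ∀ a : Box lam, eta lam pr ε (π a).1 (π a).2 = ε * eta lam pr ε a.1 a.2) :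
    Jmat pr ε π * Jmat pr ε π = ε • 1 := by
  have h : ∀ a : Box lam,
      (eta lam pr ε a.1 a.2 • single a (π a) 1) * Jmat pr ε π = ε • single a a (1 : ℂ) := by
    intro a
    rw [smul_mul_assoc, single_mul_Jmat, hη, hπ, smul_smul]
    congr 1
    linear_combination ε * eta_mul_self hε a.1 a.2
  nth_rw 1 [Jmat]
  rw [Finset.sum_mul, Finset.sum_congr rfl fun a _ => h a, ← Finset.smul_sum, sum_single_one]

theorem Jmat_mul_smul_Jmat (hε : ε * ε = 1) (hπ : Function.Involutive π)
    (hη : ∀ a : Box lam, eta lam pr ε (π a).1 (π a).2 = ε * eta lam pr ε a.1 a.2) :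
    Jmat pr ε π * (ε • Jmat pr ε π) = 1 := by
  rw [Matrix.mul_smul, Jmat_mul_Jmat hε hπ hη, smul_smul, hε, one_smul]

theorem inv_Jmat (hε : ε * ε = 1) (hπ : Function.Involutive π)
    (hη : ∀ a : Box lam, eta lam pr ε (π a).1 (π a).2 = ε * eta lam pr ε a.1 a.2) :
    (Jmat pr ε π)⁻¹ = ε • Jmat pr ε π :=
  inv_eq_right_inv (Jmat_mul_smul_Jmat hε hπ hη)

theorem sigmaM_eMat (hε : ε * ε = 1) (hπ : Function.Involutive π)
    (hη : ∀ a : Box lam, eta lam pr ε (π a).1 (π a).2 = ε * eta lam pr ε a.1 a.2)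
    (a b : Box lam) :
    sigmaM pr ε π (eMat a b) =
      -(eta lam pr ε a.1 a.2 * eta lam pr ε b.1 b.2) • eMat (π b) (π a) := by
  rw [sigmaM, eMat, transpose_single, inv_Jmat hε hπ hη, smul_mul_assoc, smul_mul_assoc,
    Jmat_mul_single hπ, smul_mul_assoc, single_mul_Jmat, hη, smul_smul, smul_smul, eMat,
    ← neg_smul]
  congr 2
  linear_combination eta lam pr ε a.1 a.2 * eta lam pr ε b.1 b.2 * hε

theorem sigmaM_smul (c : ℂ) (X : Matrix (Box lam) (Box lam) ℂ) :
    sigmaM pr ε π (c • X) = c • sigmaM pr ε π X := by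
  rw [sigmaM, sigmaM, transpose_smul, Matrix.mul_smul, Matrix.smul_mul, smul_neg]

theorem sigmaM_sub (X Y : Matrix (Box lam) (Box lam) ℂ) :
    sigmaM pr ε π (X - Y) = sigmaM pr ε π X - sigmaM pr ε π Y := by
  rw [sigmaM, sigmaM, sigmaM, transpose_sub, mul_sub, sub_mul, neg_sub, neg_sub_neg]

theorem sigmaM_sigmaM_eMat (hε : ε * ε = 1) (hπ : Function.Involutive π)
    (hη : ∀ a : Box lam, eta lam pr ε (π a).1 (π a).2 = ε * eta lam pr ε a.1 a.2)
    (a b : Box lam) :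
    sigmaM pr ε π (sigmaM pr ε π (eMat a b)) = eMat a b := by
  rw [sigmaM_eMat hε hπ hη, sigmaM_smul, sigmaM_eMat hε hπ hη, hπ, hπ, hη, hη, smul_smul]
  convert one_smul ℂ (eMat a b) using 2
  linear_combination (eta lam pr ε a.1 a.2 ^ 2 * eta lam pr ε b.1 b.2 ^ 2) * hε
    + eta lam pr ε a.1 a.2 ^ 2 * eta_mul_self hε b.1 b.2 + eta_mul_self hε a.1 a.2

theorem sigmaM_lie (hε : ε * ε = 1) (hπ : Function.Involutive π)
    (hη : ∀ a : Box lam, eta lam pr ε (π a).1 (π a).2 = ε * eta lam pr ε a.1 a.2)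
    (X Y : Matrix (Box lam) (Box lam) ℂ) :
    sigmaM pr ε π ⁅X, Y⁆ = ⁅sigmaM pr ε π X, sigmaM pr ε π Y⁆ :=
  neg_conj_transpose_lie (isUnit_det_of_right_inverse (Jmat_mul_smul_Jmat hε hπ hη)) X Y

theorem fEl_lie (hε : ε * ε = 1) (hπ : Function.Involutive π)
    (hη : ∀ a : Box lam, eta lam pr ε (π a).1 (π a).2 = ε * eta lam pr ε a.1 a.2)
    (a b c d : Box lam) :
    ⁅fEl pr ε π a b, fEl pr ε π c d⁆ =
      (if a = d then (1 : ℂ) else 0) • fEl pr ε π c b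
        - (if c = b then (1 : ℂ) else 0) • fEl pr ε π a d
        - (eta lam pr ε c.1 c.2 * eta lam pr ε d.1 d.2) •
          ((if a = π c then (1 : ℂ) else 0) • fEl pr ε π (π d) b
            - (if π d = b then (1 : ℂ) else 0) • fEl pr ε π a (π c)) := by
  calc ⁅eMat a b + sigmaM pr ε π (eMat a b), eMat c d + sigmaM pr ε π (eMat c d)⁆
      = (⁅eMat a b, eMat c d⁆ + sigmaM pr ε π ⁅eMat a b, eMat c d⁆)
          + (⁅eMat a b, sigmaM pr ε π (eMat c d)⁆
            + sigmaM pr ε π ⁅eMat a b, sigmaM pr ε π (eMat c d)⁆) := by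
        -- `⁅σ e, e'⁆ = ⁅σ e, σ (σ e')⁆ = σ ⁅e, σ e'⁆`
        rw [sigmaM_lie hε hπ hη, sigmaM_lie hε hπ hη, sigmaM_sigmaM_eMat hε hπ hη, add_lie,
          lie_add, lie_add]
        abel
    _ = _ := by
        rw [sigmaM_eMat hε hπ hη c d, lie_smul, eMat_lie, eMat_lie]
        simp only [sigmaM_sub, sigmaM_smul, fEl]
        module

end ClassicalLieAlgebra

theorem fEl_bracket_general
    (n : ℕ) (lam : Fin n → ℕ)
    (ε : ℂ) (hε : ε = 1 ∨ ε = -1)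
    (pr : Fin n → Fin n) (hpr : ∀ i, pr (pr i) = i)
    (hlampr : ∀ i, lam (pr i) = lam i)
    (hfix : ∀ i, pr i = i ↔ ε * (-1 : ℂ) ^ (lam i) = -1)
    (π : Box lam ≃ Box lam)
    (hπ1 : ∀ a : Box lam, (π a).1 = pr a.1)
    (hπ2 : ∀ a : Box lam, ((π a).2 : ℕ) = lam a.1 - 1 - (a.2 : ℕ)) :
    ∀ a b c d : Box lam,
      ⁅fEl pr ε π a b, fEl pr ε π c d⁆ =
        (if a = d then (1 : ℂ) else 0) • fEl pr ε π c b
        - (if c = b then (1 : ℂ) else 0) • fEl pr ε π a d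
        - (if a = π c then
            ε * eta lam pr ε d.1 (d.2 : ℕ) * eta lam pr ε a.1 (a.2 : ℕ) else 0) •
              fEl pr ε π (π d) b
        + (if π d = b then
            ε * eta lam pr ε d.1 (d.2 : ℕ) * eta lam pr ε (π c).1 ((π c).2 : ℕ)
          else 0) • fEl pr ε π a (π c) := by
  intro a b c d
  have hε' : ε * ε = 1 := by rcases hε with rfl | rfl <;> norm_num
  have hπ : Function.Involutive π := involutive_of_pr hpr hlampr hπ1 hπ2
  have hη : ∀ a : Box lam, eta lam pr ε (π a).1 (π a).2 = ε * eta lam pr ε a.1 a.2 := by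
    intro a
    rw [hπ2, hπ1]
    exact eta_pr_sub hε' (hpr a.1) (hlampr a.1) (hfix a.1) a.2.isLt
  have hc : ε * eta lam pr ε d.1 d.2 * eta lam pr ε (π c).1 (π c).2 =
      eta lam pr ε c.1 c.2 * eta lam pr ε d.1 d.2 := by
    rw [hη]
    linear_combination eta lam pr ε c.1 c.2 * eta lam pr ε d.1 d.2 * hε'
  have ha : (if a = π c then ε * eta lam pr ε d.1 d.2 * eta lam pr ε a.1 a.2 else 0) =
      eta lam pr ε c.1 c.2 * eta lam pr ε d.1 d.2 * if a = π c then 1 else 0 := by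
    rw [mul_boole]
    split_ifs with h
    · rw [h, hc]
    · rfl
  have hb : (if π d = b then
        ε * eta lam pr ε d.1 d.2 * eta lam pr ε (π c).1 (π c).2 else 0) =
      eta lam pr ε c.1 c.2 * eta lam pr ε d.1 d.2 * if π d = b then 1 else 0 := by
    rw [hc, mul_boole]
  rw [fEl_lie hε' hπ hη, ha, hb]
  module

/-- The structure constants of the classical Lie algebra in the basis `f_{i,s}^{j,t}`
(Lemma `L:rel1`): with `a = (i,s)`, `b = (j,t)`, `c = (k,p)`, `d = (l,q)`,
`[f_{i,s}^{j,t}, f_{k,p}^{l,q}] = δ_{i,l}δ_{s,q} f_{k,p}^{j,t} − δ_{k,j}δ_{p,t} f_{i,s}^{l,q}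
− δ_{i,k'}δ_{s,p'} ε η_{l≤l'}(q) η_{i≤i'}(s) f_{l',q'}^{j,t}
+ δ_{l',j}δ_{q',t} ε η_{l≤l'}(q) η_{k'≤k}(p') f_{i,s}^{k',p'}`. -/
theorem fEl_bracket
    (n : ℕ) (lam : Fin n → ℕ) (hlam : Antitone lam) (hpos : ∀ i, 0 < lam i)
    (ε : ℂ) (hε : ε = 1 ∨ ε = -1)
    (pr : Fin n → Fin n) (hpr : ∀ i, pr (pr i) = i)
    (hlampr : ∀ i, lam (pr i) = lam i)
    (hfix : ∀ i, pr i = i ↔ ε * (-1 : ℂ) ^ (lam i) = -1)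
    (π : Box lam ≃ Box lam)
    (hπ1 : ∀ a : Box lam, (π a).1 = pr a.1)
    (hπ2 : ∀ a : Box lam, ((π a).2 : ℕ) = lam a.1 - 1 - (a.2 : ℕ)) :
    ∀ a b c d : Box lam,
      ⁅fEl pr ε π a b, fEl pr ε π c d⁆ =
        (if a = d then (1 : ℂ) else 0) • fEl pr ε π c b
        - (if c = b then (1 : ℂ) else 0) • fEl pr ε π a d
        - (if a = π c then
            ε * eta lam pr ε d.1 (d.2 : ℕ) * eta lam pr ε a.1 (a.2 : ℕ) else 0) •
              fEl pr ε π (π d) b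
        + (if π d = b then
            ε * eta lam pr ε d.1 (d.2 : ℕ) * eta lam pr ε (π c).1 ((π c).2 : ℕ)
          else 0) • fEl pr ε π a (π c) :=
  fEl_bracket_general n lam ε hε pr hpr hlampr hfix π hπ1 hπ2
end

section
/- For 1 ≤ i,j ≤ n with λ_i ≥ λ_j and 0 ≤ t < λ_j, the element ζ_i^{j,t} = Σ_{s=0}^{t} f_{i,s}^{j,s+t'} (where t' = λ_j − 1 − t) lies in the centralizer g^f = {X ∈ g : [X,f] = 0}. -/
open Matrix

/-- The nilpotent `f = Σᵢ Σ_{s=0}^{λᵢ−2} e_{i,s}^{i,s+1}`. -/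
noncomputable def fNil {n : ℕ} (lam : Fin n → ℕ) : Matrix (Box lam) (Box lam) ℂ :=
  ∑ a : Box lam, ∑ b : Box lam,
    if a.1 = b.1 ∧ (b.2 : ℕ) = (a.2 : ℕ) + 1 then eMat a b else 0

/-- `ζ_i^{j,t} = Σ_{s=0}^t f_{i,s}^{j,s+t'}` with `t' = λ_j − 1 − t`. -/
noncomputable def zeta {n : ℕ} {lam : Fin n → ℕ} (pr : Fin n → Fin n) (ε : ℂ)
    (π : Box lam ≃ Box lam) (i j : Fin n) (t : ℕ) : Matrix (Box lam) (Box lam) ℂ :=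
  ∑ a : Box lam, ∑ b : Box lam,
    if a.1 = i ∧ b.1 = j ∧ (a.2 : ℕ) ≤ t ∧
        (b.2 : ℕ) = (a.2 : ℕ) + (lam j - 1 - t) then
      fEl pr ε π a b else 0

namespace ZetaProofAux

variable {n : ℕ} {lam : Fin n → ℕ}

lemma boxExt {a b : Box lam} (h1 : a.1 = b.1) (h2 : (a.2 : ℕ) = (b.2 : ℕ)) : a = b := by
  obtain ⟨i, s⟩ := a
  obtain ⟨j, r⟩ := b
  dsimp at h1 h2
  subst h1
  exact congrArg _ (Fin.ext h2)

lemma ite_entry (P : Prop) [Decidable P] (A : Matrix (Box lam) (Box lam) ℂ) (c d : Box lam) :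
    (if P then A else 0) c d = if P then A c d else 0 := by
  split <;> simp

lemma ite_ite (P Q : Prop) [Decidable P] [Decidable Q] (x : ℂ) :
    (if P then (if Q then x else 0) else 0) = if P ∧ Q then x else 0 := by
  by_cases hP : P <;> by_cases hQ : Q <;> simp [hP, hQ]

lemma eMat_apply (a b c d : Box lam) :
    eMat a b c d = if b = c ∧ a = d then 1 else 0 := rfl

lemma sum_sum_ite (a0 b0 : Box lam) (f : Box lam → Box lam → ℂ)
    (P : Box lam → Box lam → Prop) [∀ a b, Decidable (P a b)]
    (hP : ∀ a b, P a b → a = a0 ∧ b = b0) :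
    (∑ a : Box lam, ∑ b : Box lam, if P a b then f a b else 0)
      = if P a0 b0 then f a0 b0 else 0 := by
  rw [Finset.sum_eq_single_of_mem a0 (Finset.mem_univ _)
    (fun a _ ha => Finset.sum_eq_zero fun b _ => if_neg fun h => ha (hP _ _ h).1)]
  rw [Finset.sum_eq_single_of_mem b0 (Finset.mem_univ _)
    (fun b _ hb => if_neg fun h => hb (hP _ _ h).2)]

lemma fNil_apply (c d : Box lam) :
    fNil lam c d = if d.1 = c.1 ∧ (c.2 : ℕ) = (d.2 : ℕ) + 1 then 1 else 0 := by
  unfold fNil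
  simp only [Matrix.sum_apply]
  rw [show (∑ a : Box lam, ∑ b : Box lam,
      (if a.1 = b.1 ∧ (b.2 : ℕ) = (a.2 : ℕ) + 1 then eMat a b else 0) c d)
    = ∑ a : Box lam, ∑ b : Box lam,
      (if ((a.1 = b.1 ∧ (b.2 : ℕ) = (a.2 : ℕ) + 1) ∧ b = c ∧ a = d) then 1 else 0) from
    Finset.sum_congr rfl fun a _ => Finset.sum_congr rfl fun b _ => by
      rw [ite_entry, eMat_apply, ite_ite]]
  rw [sum_sum_ite d c _ _ (fun a b h => ⟨h.2.2, h.2.1⟩)]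
  simp

lemma pi_invol (pr : Fin n → Fin n) (π : Box lam ≃ Box lam)
    (hpr : ∀ i, pr (pr i) = i) (hlampr : ∀ i, lam (pr i) = lam i)
    (hπ1 : ∀ a : Box lam, (π a).1 = pr a.1)
    (hπ2 : ∀ a : Box lam, ((π a).2 : ℕ) = lam a.1 - 1 - (a.2 : ℕ)) (a : Box lam) :
    π (π a) = a := by
  have h1 : (π (π a)).1 = a.1 := by rw [hπ1, hπ1, hpr]
  apply boxExt h1
  rw [hπ2, hπ2, hπ1, hlampr]
  have := a.2.isLt
  omega

lemma eps_sq {ε : ℂ} (hε : ε = 1 ∨ ε = -1) : ε * ε = 1 := by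
  rcases hε with h | h <;> rw [h] <;> norm_num

lemma npow_self (k : ℕ) : ((-1 : ℂ)) ^ k * (-1) ^ k = 1 := by
  rw [← mul_pow]; norm_num

lemma eta_sq (pr : Fin n → Fin n) {ε : ℂ} (hε : ε = 1 ∨ ε = -1) (i : Fin n) (s : ℕ) :
    eta lam pr ε i s * eta lam pr ε i s = 1 := by
  have hE := eps_sq hε
  unfold eta
  split_ifs
  · exact npow_self s
  · have h2 := npow_self (lam i - 1 - s)
    linear_combination ((-1 : ℂ) ^ (lam i - 1 - s) * (-1 : ℂ) ^ (lam i - 1 - s)) * hE + h2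

lemma eta_pi (pr : Fin n → Fin n) {ε : ℂ} (hε : ε = 1 ∨ ε = -1)
    (hpr : ∀ i, pr (pr i) = i) (hlampr : ∀ i, lam (pr i) = lam i)
    (hpos : ∀ i, 0 < lam i) (hfix : ∀ i, pr i = i ↔ ε * (-1 : ℂ) ^ (lam i) = -1)
    (i : Fin n) (s : ℕ) (hs : s < lam i) :
    eta lam pr ε (pr i) (lam i - 1 - s) = ε * eta lam pr ε i s := by
  have hE := eps_sq hε
  unfold eta
  simp only [hpr, hlampr]
  rcases lt_trichotomy i (pr i) with h | h | h
  · rw [if_neg (not_le.mpr h), if_pos h.le]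
    have h2 : lam i - 1 - (lam i - 1 - s) = s := by omega
    rw [h2]
  · rw [if_pos (le_of_eq h.symm), if_pos (le_of_eq h)]
    have hm : ε * (-1 : ℂ) ^ (lam i) = -1 := (hfix i).mp h.symm
    have h1 : lam i - 1 + 1 = lam i := by have := hpos i; omega
    rw [← h1, pow_succ] at hm
    have hm2 : (-1 : ℂ) ^ (lam i - 1) = ε := by
      linear_combination (-ε) * hm + (-((-1 : ℂ) ^ (lam i - 1))) * hE
    have h3 : (-1 : ℂ) ^ (lam i - 1 - s) * (-1) ^ s = ε := by
      rw [← pow_add, show lam i - 1 - s + s = lam i - 1 by omega, hm2]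
    have h4 := npow_self s
    linear_combination (-1 : ℂ) ^ s * h3 - (-1 : ℂ) ^ (lam i - 1 - s) * h4
  · rw [if_pos h.le, if_neg (not_le.mpr h)]
    linear_combination (-((-1 : ℂ) ^ (lam i - 1 - s))) * hE

lemma eta_adj (pr : Fin n → Fin n) {ε : ℂ} (hε : ε = 1 ∨ ε = -1)
    (i : Fin n) (s : ℕ) (hs : s + 1 < lam i) :
    eta lam pr ε i s * eta lam pr ε i (s + 1) = -1 := by
  have hE := eps_sq hε
  unfold eta
  split_ifs
  · rw [← pow_add, show s + (s + 1) = 2 * s + 1 by ring, pow_succ, pow_mul]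
    norm_num
  · have h2 : lam i - 1 - s = (lam i - 1 - (s + 1)) + 1 := by omega
    rw [h2, pow_succ]
    have h4 := npow_self (lam i - 1 - (s + 1))
    linear_combination (-((-1 : ℂ) ^ (lam i - 1 - (s + 1)) * (-1 : ℂ) ^ (lam i - 1 - (s + 1)))) * hE - h4

end ZetaProofAux

namespace ZetaProofAux

variable {n : ℕ} {lam : Fin n → ℕ} (pr : Fin n → Fin n) {ε : ℂ} (π : Box lam ≃ Box lam)

lemma Jmat_apply (c d : Box lam) :
    Jmat pr ε π c d = if π c = d then eta lam pr ε c.1 (c.2 : ℕ) else 0 := by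
  unfold Jmat
  rw [Matrix.sum_apply]
  rw [Finset.sum_eq_single_of_mem c (Finset.mem_univ _) ?_]
  · rw [Matrix.smul_apply,
      show (Matrix.single c (π c) (1 : ℂ)) c d = if c = c ∧ π c = d then 1 else 0 from rfl]
    by_cases h : π c = d <;> simp [h]
  · intro b _ hb
    rw [Matrix.smul_apply,
      show (Matrix.single b (π b) (1 : ℂ)) c d = if b = c ∧ π b = d then 1 else 0 from rfl,
      if_neg (fun h => hb h.1)]
    simp

variable (hε : ε = 1 ∨ ε = -1)
  (hpr : ∀ i, pr (pr i) = i) (hlampr : ∀ i, lam (pr i) = lam i)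
  (hpos : ∀ i, 0 < lam i) (hfix : ∀ i, pr i = i ↔ ε * (-1 : ℂ) ^ (lam i) = -1)
  (hπ1 : ∀ a : Box lam, (π a).1 = pr a.1)
  (hπ2 : ∀ a : Box lam, ((π a).2 : ℕ) = lam a.1 - 1 - (a.2 : ℕ))

include hε hpr hlampr hpos hfix hπ1 hπ2

lemma eta_pi_box (a : Box lam) :
    eta lam pr ε (π a).1 ((π a).2 : ℕ) = ε * eta lam pr ε a.1 (a.2 : ℕ) := by
  rw [hπ2, hπ1]
  exact eta_pi pr hε hpr hlampr hpos hfix a.1 (a.2 : ℕ) a.2.isLt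

lemma J_mul_J : Jmat pr ε π * Jmat pr ε π = ε • (1 : Matrix (Box lam) (Box lam) ℂ) := by
  ext c d
  rw [Matrix.mul_apply, Finset.sum_eq_single_of_mem (π c) (Finset.mem_univ _) ?_]
  · rw [Jmat_apply, if_pos rfl, Jmat_apply, pi_invol pr π hpr hlampr hπ1 hπ2,
      eta_pi_box pr π hε hpr hlampr hpos hfix hπ1 hπ2]
    by_cases h : c = d
    · subst h
      rw [if_pos rfl, Matrix.smul_apply, Matrix.one_apply_eq, smul_eq_mul, mul_one]
      have hA := eta_sq (lam := lam) pr hε c.1 (c.2 : ℕ)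
      linear_combination ε * hA
    · rw [if_neg h, Matrix.smul_apply, Matrix.one_apply_ne h, mul_zero, smul_zero]
  · intro b _ hb
    rw [Jmat_apply, if_neg (fun h => hb h.symm), zero_mul]

lemma Jmat_inv : (Jmat pr ε π)⁻¹ = ε • Jmat pr ε π := by
  apply Matrix.inv_eq_left_inv
  rw [Matrix.smul_mul, J_mul_J pr π hε hpr hlampr hpos hfix hπ1 hπ2, smul_smul, eps_sq hε, one_smul]

omit hε hpr hlampr hpos hfix hπ1 hπ2

lemma J_mul_apply (M : Matrix (Box lam) (Box lam) ℂ) (c d : Box lam) :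
    (Jmat pr ε π * M) c d = eta lam pr ε c.1 (c.2 : ℕ) * M (π c) d := by
  rw [Matrix.mul_apply, Finset.sum_eq_single_of_mem (π c) (Finset.mem_univ _) ?_]
  · rw [Jmat_apply, if_pos rfl]
  · intro b _ hb
    rw [Jmat_apply, if_neg (fun h => hb h.symm), zero_mul]

lemma mul_J_apply (hpr : ∀ i, pr (pr i) = i) (hlampr : ∀ i, lam (pr i) = lam i)
    (hπ1 : ∀ a : Box lam, (π a).1 = pr a.1)
    (hπ2 : ∀ a : Box lam, ((π a).2 : ℕ) = lam a.1 - 1 - (a.2 : ℕ))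
    (M : Matrix (Box lam) (Box lam) ℂ) (c d : Box lam) :
    (M * Jmat pr ε π) c d = M c (π d) * eta lam pr ε (π d).1 ((π d).2 : ℕ) := by
  rw [Matrix.mul_apply, Finset.sum_eq_single_of_mem (π d) (Finset.mem_univ _) ?_]
  · rw [Jmat_apply, if_pos (pi_invol pr π hpr hlampr hπ1 hπ2 d)]
  · intro b _ hb
    rw [Jmat_apply, if_neg, mul_zero]
    intro h
    exact hb (by rw [← h, pi_invol pr π hpr hlampr hπ1 hπ2])

include hε hpr hlampr hpos hfix hπ1 hπ2

lemma sigma_apply (X : Matrix (Box lam) (Box lam) ℂ) (c d : Box lam) :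
    sigmaM pr ε π X c d =
      -((eta lam pr ε c.1 (c.2 : ℕ) * eta lam pr ε d.1 (d.2 : ℕ)) * X (π d) (π c)) := by
  unfold sigmaM
  rw [Jmat_inv pr π hε hpr hlampr hpos hfix hπ1 hπ2, Matrix.neg_apply,
    mul_J_apply pr π hpr hlampr hπ1 hπ2, Matrix.smul_mul, Matrix.smul_apply,
    J_mul_apply, Matrix.transpose_apply,
    eta_pi_box pr π hε hpr hlampr hpos hfix hπ1 hπ2 d, smul_eq_mul]
  have hE := eps_sq hε
  linear_combination (-(eta lam pr ε c.1 (c.2 : ℕ) * eta lam pr ε d.1 (d.2 : ℕ) * X (π d) (π c))) * hE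

end ZetaProofAux

namespace ZetaProofAux

variable {n : ℕ} {lam : Fin n → ℕ} (pr : Fin n → Fin n) {ε : ℂ} (π : Box lam ≃ Box lam)
  (hε : ε = 1 ∨ ε = -1)
  (hpr : ∀ i, pr (pr i) = i) (hlampr : ∀ i, lam (pr i) = lam i)
  (hpos : ∀ i, 0 < lam i) (hfix : ∀ i, pr i = i ↔ ε * (-1 : ℂ) ^ (lam i) = -1)
  (hπ1 : ∀ a : Box lam, (π a).1 = pr a.1)
  (hπ2 : ∀ a : Box lam, ((π a).2 : ℕ) = lam a.1 - 1 - (a.2 : ℕ))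

include hε hpr hlampr hpos hfix hπ1 hπ2

lemma fEl_apply (a b c d : Box lam) :
    fEl pr ε π a b c d =
      (if b = c ∧ a = d then 1 else 0) +
      (if b = π d ∧ a = π c then
        -(eta lam pr ε c.1 (c.2 : ℕ) * eta lam pr ε d.1 (d.2 : ℕ)) else 0) := by
  unfold fEl
  rw [Matrix.add_apply, sigma_apply pr π hε hpr hlampr hpos hfix hπ1 hπ2,
    eMat_apply, eMat_apply]
  congr 1
  split_ifs <;> ring

lemma zeta_apply (i j : Fin n) (t : ℕ) (c d : Box lam) :
    zeta pr ε π i j t c d =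
      (if d.1 = i ∧ c.1 = j ∧ (d.2 : ℕ) ≤ t ∧ (c.2 : ℕ) = (d.2 : ℕ) + (lam j - 1 - t)
        then 1 else 0)
      + (if (π c).1 = i ∧ (π d).1 = j ∧ ((π c).2 : ℕ) ≤ t ∧
            ((π d).2 : ℕ) = ((π c).2 : ℕ) + (lam j - 1 - t)
          then -(eta lam pr ε c.1 (c.2 : ℕ) * eta lam pr ε d.1 (d.2 : ℕ)) else 0) := by
  unfold zeta
  simp only [Matrix.sum_apply]
  rw [show (∑ a : Box lam, ∑ b : Box lam,
      (if a.1 = i ∧ b.1 = j ∧ (a.2 : ℕ) ≤ t ∧ (b.2 : ℕ) = (a.2 : ℕ) + (lam j - 1 - t) then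
        fEl pr ε π a b else 0) c d)
    = ∑ a : Box lam, ∑ b : Box lam,
      ((if ((a.1 = i ∧ b.1 = j ∧ (a.2 : ℕ) ≤ t ∧ (b.2 : ℕ) = (a.2 : ℕ) + (lam j - 1 - t)) ∧
          b = c ∧ a = d) then 1 else 0)
       + (if ((a.1 = i ∧ b.1 = j ∧ (a.2 : ℕ) ≤ t ∧ (b.2 : ℕ) = (a.2 : ℕ) + (lam j - 1 - t)) ∧
          b = π d ∧ a = π c) then
            -(eta lam pr ε c.1 (c.2 : ℕ) * eta lam pr ε d.1 (d.2 : ℕ)) else 0)) from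
    Finset.sum_congr rfl fun a _ => Finset.sum_congr rfl fun b _ => by
      rw [ite_entry]
      by_cases h : (a.1 = i ∧ b.1 = j ∧ (a.2 : ℕ) ≤ t ∧ (b.2 : ℕ) = (a.2 : ℕ) + (lam j - 1 - t))
      · rw [if_pos h, fEl_apply pr π hε hpr hlampr hpos hfix hπ1 hπ2]
        congr 1
        · exact if_congr (and_iff_right h).symm rfl rfl
        · exact if_congr (and_iff_right h).symm rfl rfl
      · rw [if_neg h, if_neg (fun hh => h hh.1), if_neg (fun hh => h hh.1), add_zero]]
  rw [Finset.sum_congr rfl fun a _ => Finset.sum_add_distrib, Finset.sum_add_distrib]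
  rw [sum_sum_ite d c _ _ (fun a b h => ⟨h.2.2, h.2.1⟩),
    sum_sum_ite (π c) (π d) _ _ (fun a b h => ⟨h.2.2, h.2.1⟩)]
  congr 1
  · exact if_congr ⟨fun h => h.1, fun h => ⟨h, rfl, rfl⟩⟩ rfl rfl
  · exact if_congr ⟨fun h => h.1, fun h => ⟨h, rfl, rfl⟩⟩ rfl rfl

omit hε hpr hlampr hpos hfix hπ1 hπ2

lemma mul_fNil_apply (X : Matrix (Box lam) (Box lam) ℂ) (c d : Box lam) :
    (X * fNil lam) c d =
      if h : (d.2 : ℕ) + 1 < lam d.1 then X c ⟨d.1, ⟨(d.2 : ℕ) + 1, h⟩⟩ else 0 := by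
  rw [Matrix.mul_apply]
  split_ifs with h
  · rw [Finset.sum_eq_single_of_mem (⟨d.1, ⟨(d.2 : ℕ) + 1, h⟩⟩ : Box lam) (Finset.mem_univ _) ?_]
    · rw [fNil_apply, if_pos ⟨rfl, rfl⟩, mul_one]
    · intro b _ hb
      rw [fNil_apply, if_neg, mul_zero]
      rintro ⟨h1, h2⟩
      exact hb (boxExt h1.symm h2)
  · refine Finset.sum_eq_zero fun b _ => ?_
    rw [fNil_apply, if_neg, mul_zero]
    rintro ⟨h1, h2⟩
    have h3 : lam d.1 = lam b.1 := congrArg lam h1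
    have := b.2.isLt
    omega

lemma fNil_mul_apply (X : Matrix (Box lam) (Box lam) ℂ) (c d : Box lam) :
    (fNil lam * X) c d =
      if h : 0 < (c.2 : ℕ) then
        X ⟨c.1, ⟨(c.2 : ℕ) - 1, lt_of_le_of_lt (Nat.sub_le _ _) c.2.isLt⟩⟩ d else 0 := by
  rw [Matrix.mul_apply]
  split_ifs with h
  · rw [Finset.sum_eq_single_of_mem
      (⟨c.1, ⟨(c.2 : ℕ) - 1, lt_of_le_of_lt (Nat.sub_le _ _) c.2.isLt⟩⟩ : Box lam)
      (Finset.mem_univ _) ?_]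
    · rw [fNil_apply, if_pos ⟨rfl, by simp; omega⟩, one_mul]
    · intro b _ hb
      rw [fNil_apply, if_neg, zero_mul]
      rintro ⟨h1, h2⟩
      exact hb (boxExt h1 (by simp; omega))
  · refine Finset.sum_eq_zero fun b _ => ?_
    rw [fNil_apply, if_neg, zero_mul]
    rintro ⟨h1, h2⟩
    omega

end ZetaProofAux

open ZetaProofAux

/-- The elements `ζ_i^{j,t} = Σ_{s=0}^t f_{i,s}^{j,s+t'}` (with `t' = λ_j − 1 − t`,
`0 ≤ t < λ_j`, `λ_i ≥ λ_j`) lie in the centralizer `g^f = {X ∈ g : [X,f] = 0}`. -/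
theorem zeta_in_centralizer
    (n : ℕ) (lam : Fin n → ℕ) (hlam : Antitone lam) (hpos : ∀ i, 0 < lam i)
    (ε : ℂ) (hε : ε = 1 ∨ ε = -1)
    (pr : Fin n → Fin n) (hpr : ∀ i, pr (pr i) = i)
    (hlampr : ∀ i, lam (pr i) = lam i)
    (hfix : ∀ i, pr i = i ↔ ε * (-1 : ℂ) ^ (lam i) = -1)
    (π : Box lam ≃ Box lam)
    (hπ1 : ∀ a : Box lam, (π a).1 = pr a.1)
    (hπ2 : ∀ a : Box lam, ((π a).2 : ℕ) = lam a.1 - 1 - (a.2 : ℕ))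
    (i j : Fin n) (t : ℕ) (ht : t < lam j) (hij : lam j ≤ lam i) :
    sigmaM pr ε π (zeta pr ε π i j t) = zeta pr ε π i j t ∧
    ⁅zeta pr ε π i j t, fNil lam⁆ = 0 := by
  constructor
  · ext c d
    rw [sigma_apply pr π hε hpr hlampr hpos hfix hπ1 hπ2,
      zeta_apply pr π hε hpr hlampr hpos hfix hπ1 hπ2,
      zeta_apply pr π hε hpr hlampr hpos hfix hπ1 hπ2]
    rw [pi_invol pr π hpr hlampr hπ1 hπ2 d, pi_invol pr π hpr hlampr hπ1 hπ2 c]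
    simp only [eta_pi_box pr π hε hpr hlampr hpos hfix hπ1 hπ2]
    have hA := eta_sq (lam := lam) pr hε c.1 (c.2 : ℕ)
    have hB := eta_sq (lam := lam) pr hε d.1 (d.2 : ℕ)
    have hE := eps_sq hε
    set A := eta lam pr ε c.1 (c.2 : ℕ) with hAdef
    set B := eta lam pr ε d.1 (d.2 : ℕ) with hBdef
    clear_value A B
    split_ifs <;>
      first
        | ring1
        | linear_combination (A * A * B * B) * hE + (B * B) * hA + hB
  · rw [Ring.lie_def, sub_eq_zero]
    ext c d
    obtain ⟨k, pf⟩ := c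
    obtain ⟨l, qf⟩ := d
    have hp : (pf : ℕ) < lam k := pf.isLt
    have hq : (qf : ℕ) < lam l := qf.isLt
    rw [mul_fNil_apply, fNil_mul_apply]
    split_ifs with g1 g2 g2
    · -- both interior
      rw [zeta_apply pr π hε hpr hlampr hpos hfix hπ1 hπ2,
        zeta_apply pr π hε hpr hlampr hpos hfix hπ1 hπ2]
      simp only [hπ1, hπ2]
      have g1' : (qf : ℕ) + 1 < lam l := g1
      have g2' : 0 < (pf : ℕ) := g2
      have hPiff : (l = i ∧ k = j ∧ (qf : ℕ) + 1 ≤ t ∧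
            (pf : ℕ) = (qf : ℕ) + 1 + (lam j - 1 - t)) ↔
          (l = i ∧ k = j ∧ (qf : ℕ) ≤ t ∧ (pf : ℕ) - 1 = (qf : ℕ) + (lam j - 1 - t)) := by
        constructor
        · rintro ⟨rfl, rfl, h3, h4⟩
          exact ⟨rfl, rfl, by omega, by omega⟩
        · rintro ⟨rfl, rfl, h3, h4⟩
          exact ⟨rfl, rfl, by omega, by omega⟩
      have hQiff : (pr k = i ∧ pr l = j ∧ lam k - 1 - (pf : ℕ) ≤ t ∧
            lam l - 1 - ((qf : ℕ) + 1) = lam k - 1 - (pf : ℕ) + (lam j - 1 - t)) ↔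
          (pr k = i ∧ pr l = j ∧ lam k - 1 - ((pf : ℕ) - 1) ≤ t ∧
            lam l - 1 - (qf : ℕ) = lam k - 1 - ((pf : ℕ) - 1) + (lam j - 1 - t)) := by
        constructor
        · rintro ⟨h1, h2, h3, h4⟩
          have hk : lam i = lam k := by rw [← h1, hlampr]
          have hl : lam j = lam l := by rw [← h2, hlampr]
          exact ⟨h1, h2, by omega, by omega⟩
        · rintro ⟨h1, h2, h3, h4⟩
          have hk : lam i = lam k := by rw [← h1, hlampr]
          have hl : lam j = lam l := by rw [← h2, hlampr]
          exact ⟨h1, h2, by omega, by omega⟩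
      have e1 : eta lam pr ε k ((pf : ℕ) - 1) * eta lam pr ε k (pf : ℕ) = -1 := by
        have h := eta_adj (lam := lam) pr hε k ((pf : ℕ) - 1) (by omega)
        rwa [show (pf : ℕ) - 1 + 1 = (pf : ℕ) by omega] at h
      have e2 : eta lam pr ε l (qf : ℕ) * eta lam pr ε l ((qf : ℕ) + 1) = -1 :=
        eta_adj (lam := lam) pr hε l (qf : ℕ) g1'
      have s1 := eta_sq (lam := lam) pr hε k (pf : ℕ)
      have s2 := eta_sq (lam := lam) pr hε l ((qf : ℕ) + 1)
      have hval : eta lam pr ε k (pf : ℕ) * eta lam pr ε l ((qf : ℕ) + 1)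
          = eta lam pr ε k ((pf : ℕ) - 1) * eta lam pr ε l (qf : ℕ) := by
        have hX : eta lam pr ε k ((pf : ℕ) - 1) = -(eta lam pr ε k (pf : ℕ)) := by
          linear_combination eta lam pr ε k (pf : ℕ) * e1 - eta lam pr ε k ((pf : ℕ) - 1) * s1
        have hU : eta lam pr ε l (qf : ℕ) = -(eta lam pr ε l ((qf : ℕ) + 1)) := by
          linear_combination eta lam pr ε l ((qf : ℕ) + 1) * e2 - eta lam pr ε l (qf : ℕ) * s2
        rw [hX, hU]; ring
      simp only [hPiff, hQiff, hval]
    · -- g1 true, g2 false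
      rw [zeta_apply pr π hε hpr hlampr hpos hfix hπ1 hπ2]
      simp only [hπ1, hπ2]
      have g1' : (qf : ℕ) + 1 < lam l := g1
      have g2' : ¬ 0 < (pf : ℕ) := g2
      have hn1 : ¬(l = i ∧ k = j ∧ (qf : ℕ) + 1 ≤ t ∧
          (pf : ℕ) = (qf : ℕ) + 1 + (lam j - 1 - t)) := by
        rintro ⟨h1, h2, h3, h4⟩
        omega
      have hn2 : ¬(pr k = i ∧ pr l = j ∧ lam k - 1 - (pf : ℕ) ≤ t ∧
          lam l - 1 - ((qf : ℕ) + 1) = lam k - 1 - (pf : ℕ) + (lam j - 1 - t)) := by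
        rintro ⟨h1, h2, h3, h4⟩
        have hk : lam i = lam k := by rw [← h1, hlampr]
        have hl : lam j = lam l := by rw [← h2, hlampr]
        omega
      rw [if_neg hn1, if_neg hn2]
      norm_num
    · -- g1 false, g2 true
      rw [zeta_apply pr π hε hpr hlampr hpos hfix hπ1 hπ2]
      simp only [hπ1, hπ2]
      have g1' : ¬ (qf : ℕ) + 1 < lam l := g1
      have g2' : 0 < (pf : ℕ) := g2
      have hn1 : ¬(l = i ∧ k = j ∧ (qf : ℕ) ≤ t ∧
          (pf : ℕ) - 1 = (qf : ℕ) + (lam j - 1 - t)) := by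
        rintro ⟨h1, h2, h3, h4⟩
        have hk : lam l = lam i := congrArg lam h1
        have hl : lam k = lam j := congrArg lam h2
        omega
      have hn2 : ¬(pr k = i ∧ pr l = j ∧ lam k - 1 - ((pf : ℕ) - 1) ≤ t ∧
          lam l - 1 - (qf : ℕ) = lam k - 1 - ((pf : ℕ) - 1) + (lam j - 1 - t)) := by
        rintro ⟨h1, h2, h3, h4⟩
        have hk : lam i = lam k := by rw [← h1, hlampr]
        have hl : lam j = lam l := by rw [← h2, hlampr]
        omega
      rw [if_neg hn1, if_neg hn2]
      norm_num
    · rfl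
end

section
/- Let i, j, k ∈ {1,...,n} with λ_i < λ_k < λ_j, and let 0 ≤ s < λ_i and 0 ≤ t < λ_k. Then in g^f, [ζ_i^{k,s}, ζ_k^{j,t}] = −ζ_i^{j, s + t − (λ_k − 1)}. In particular, taking t = λ_k − 1, every ζ_i^{j,s} with λ_i < λ_k < λ_j is generated by ζ's between 'adjacent' block sizes. -/
/-!
Write `ζ = Z + σ Z`, where `Z` is the `gl(V)`-part of `ζ`. The Gram matrix `J` is monomial
with nonzero entries, hence invertible, so `σ X * σ Y = -σ (Y * X)`. Grade `V` by the length `λ` of the row of a box: as `π` preserves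
row lengths, `J` commutes with the projections onto the graded pieces, so `σ` turns a block
from level `ℓ` to level `m` into a block from `m` to `ℓ`. Now `Z_i^{k,s}` goes from level
`λ_i` to `λ_k` and `Z_k^{j,t}` from `λ_k` to `λ_j`; as the three levels are distinct, the only
products surviving in the bracket are `Z_k^{j,t} Z_i^{k,s}`, which is `Z_i^{j,s+t-(λ_k-1)}`
by composing the index relations, and `σ Z_i^{k,s} σ Z_k^{j,t} = -σ (Z_k^{j,t} Z_i^{k,s})`.
-/

open Matrix

/-- `ζ_i^{j,t} = Σ_{s=0}^t f_{i,s}^{j,s+t'}` with `t' = λ_j − 1 − t`, allowing an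
integer parameter `t` (terms with out-of-range indices vanish, and `ζ_i^{j,t} = 0`
for `t < 0`). -/
noncomputable def zetaZ {n : ℕ} {lam : Fin n → ℕ} (pr : Fin n → Fin n) (ε : ℂ)
    (π : Box lam ≃ Box lam) (i j : Fin n) (t : ℤ) : Matrix (Box lam) (Box lam) ℂ :=
  ∑ a : Box lam, ∑ b : Box lam,
    if a.1 = i ∧ b.1 = j ∧ ((a.2 : ℕ) : ℤ) ≤ t ∧
        ((b.2 : ℕ) : ℤ) = ((a.2 : ℕ) : ℤ) + ((lam j : ℤ) - 1 - t) then
      fEl pr ε π a b else 0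

section LevelProj

variable {ι β R : Type*} [DecidableEq ι] [DecidableEq β] [CommRing R]

def levelProj (f : ι → β) (ℓ : β) : Matrix ι ι R :=
  diagonal fun a => if f a = ℓ then 1 else 0

variable {f : ι → β}

lemma levelProj_mul_levelProj [Fintype ι] (ℓ m : β) :
    (levelProj f ℓ : Matrix ι ι R) * levelProj f m = if ℓ = m then levelProj f ℓ else 0 := by
  split_ifs with h
  · subst h
    simp only [levelProj, diagonal_mul_diagonal]
    congr 1; ext a; split_ifs <;> simp
  · simp only [levelProj, diagonal_mul_diagonal]
    rw [← diagonal_zero]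
    congr 1; ext a; split_ifs <;> simp_all

lemma transpose_levelProj (ℓ : β) : (levelProj f ℓ : Matrix ι ι R)ᵀ = levelProj f ℓ :=
  diagonal_transpose _

lemma mul_eq_zero_of_levelProj [Fintype ι] {ℓ m m' r : β} {X Y : Matrix ι ι R}
    (hX : levelProj f ℓ * X * levelProj f m = X) (hY : levelProj f m' * Y * levelProj f r = Y)
    (h : m ≠ m') : X * Y = 0 := by
  rw [← hX, ← hY]
  simp only [Matrix.mul_assoc]
  rw [← Matrix.mul_assoc (levelProj f m), levelProj_mul_levelProj, if_neg h, Matrix.zero_mul,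
    Matrix.mul_zero, Matrix.mul_zero]

end LevelProj

section Sigma

variable {n : ℕ} {lam : Fin n → ℕ} (pr : Fin n → Fin n) (ε : ℂ) (π : Box lam ≃ Box lam)

lemma Jmat_apply (a b : Box lam) :
    Jmat pr ε π a b = if π a = b then eta lam pr ε a.1 a.2 else 0 := by
  simp only [Jmat, Matrix.sum_apply, Matrix.smul_apply, single_apply, smul_eq_mul, mul_ite,
    mul_one, mul_zero]
  rw [Fintype.sum_eq_single a fun c hc => if_neg fun h => hc h.1]
  simp

lemma isUnit_det_Jmat (hε : ε ≠ 0) : IsUnit (Jmat pr ε π).det := by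
  have hJ_eq : Jmat pr ε π =
      diagonal (fun a => eta lam pr ε a.1 a.2) * Equiv.Perm.permMatrix ℂ π := by
    ext a b
    simp [Jmat_apply, PEquiv.toMatrix_apply]
  have heta : ∀ a : Box lam, eta lam pr ε a.1 a.2 ≠ 0 := fun a => by
    unfold eta; split_ifs <;> simp [hε]
  rw [hJ_eq, det_mul, det_diagonal, det_permutation, isUnit_iff_ne_zero]
  refine mul_ne_zero (Finset.prod_ne_zero_iff.mpr fun a _ => heta a) ?_
  rcases Int.units_eq_one_or (Equiv.Perm.sign π) with h | h <;> simp [h]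

lemma Jmat_commute_levelProj (hπ : ∀ a, lam (π a).1 = lam a.1) (ℓ : ℕ) :
    Commute (Jmat pr ε π) (levelProj (fun a : Box lam => lam a.1) ℓ) := by
  ext a b
  simp only [levelProj, mul_diagonal, diagonal_mul, Jmat_apply]
  rcases eq_or_ne (π a) b with rfl | h
  · simp [hπ]
  · simp [h]

variable {pr ε π}

lemma sigmaM_mul_sigmaM (hJ : IsUnit (Jmat pr ε π).det) (X Y : Matrix (Box lam) (Box lam) ℂ) :
    sigmaM pr ε π X * sigmaM pr ε π Y = -sigmaM pr ε π (Y * X) := by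
  simp only [sigmaM, transpose_mul, neg_mul_neg, neg_neg, Matrix.mul_assoc,
    mul_nonsing_inv_cancel_left _ _ hJ]

lemma sigmaM_mul_mul {P Q : Matrix (Box lam) (Box lam) ℂ} (hJ : IsUnit (Jmat pr ε π).det)
    (hP : Commute (Jmat pr ε π) P) (hQ : Commute (Jmat pr ε π) Q) (hPt : Pᵀ = P) (hQt : Qᵀ = Q)
    (X : Matrix (Box lam) (Box lam) ℂ) :
    sigmaM pr ε π (P * X * Q) = Q * sigmaM pr ε π X * P := by
  simp only [sigmaM]
  generalize Jmat pr ε π = J at hJ hP hQ ⊢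
  have hQinv : J⁻¹ * Q = Q * J⁻¹ := by
    calc J⁻¹ * Q = J⁻¹ * (Q * J) * J⁻¹ := by
          rw [Matrix.mul_assoc, Matrix.mul_assoc Q, mul_nonsing_inv _ hJ, Matrix.mul_one]
      _ = Q * J⁻¹ := by
          rw [← hQ.eq, ← Matrix.mul_assoc, nonsing_inv_mul _ hJ, Matrix.one_mul]
  simp only [transpose_mul, hPt, hQt, Matrix.mul_neg, Matrix.neg_mul, Matrix.mul_assoc, hP.eq]
  rw [← Matrix.mul_assoc J⁻¹, hQinv, Matrix.mul_assoc]

lemma levelProj_mul_sigmaM_mul_levelProj {β : Type*} [DecidableEq β] {f : Box lam → β}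
    (hJ : IsUnit (Jmat pr ε π).det) (hJP : ∀ ℓ, Commute (Jmat pr ε π) (levelProj f ℓ)) {ℓ m : β}
    {X : Matrix (Box lam) (Box lam) ℂ} (hX : levelProj f ℓ * X * levelProj f m = X) :
    levelProj f m * sigmaM pr ε π X * levelProj f ℓ = sigmaM pr ε π X := by
  rw [← sigmaM_mul_mul hJ (hJP ℓ) (hJP m) (transpose_levelProj _) (transpose_levelProj _), hX]

lemma lie_add_sigmaM_of_levelProj {β : Type*} [DecidableEq β] {f : Box lam → β}
    (hJ : IsUnit (Jmat pr ε π).det) (hJP : ∀ ℓ, Commute (Jmat pr ε π) (levelProj f ℓ))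
    {ℓ₁ ℓ₂ ℓ₃ : β} (h₁₂ : ℓ₁ ≠ ℓ₂) (h₂₃ : ℓ₂ ≠ ℓ₃) (h₁₃ : ℓ₁ ≠ ℓ₃)
    {X Y : Matrix (Box lam) (Box lam) ℂ} (hX : levelProj f ℓ₂ * X * levelProj f ℓ₁ = X)
    (hY : levelProj f ℓ₃ * Y * levelProj f ℓ₂ = Y) :
    ⁅X + sigmaM pr ε π X, Y + sigmaM pr ε π Y⁆ = -(Y * X + sigmaM pr ε π (Y * X)) := by
  have hσX := levelProj_mul_sigmaM_mul_levelProj hJ hJP hX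
  have hσY := levelProj_mul_sigmaM_mul_levelProj hJ hJP hY
  rw [Ring.lie_def]
  simp only [Matrix.add_mul, Matrix.mul_add, mul_eq_zero_of_levelProj hX hY h₁₃,
    mul_eq_zero_of_levelProj hX hσY h₁₂, mul_eq_zero_of_levelProj hσX hY h₂₃,
    mul_eq_zero_of_levelProj hY hσX h₁₂.symm, mul_eq_zero_of_levelProj hσY hX h₂₃.symm,
    mul_eq_zero_of_levelProj hσY hσX h₁₃.symm, sigmaM_mul_sigmaM hJ]
  abel

end Sigma

section Zeta

variable {n : ℕ} {lam : Fin n → ℕ}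

def ZetaRel (lam : Fin n → ℕ) (i j : Fin n) (t : ℤ) (a b : Box lam) : Prop :=
  a.1 = i ∧ b.1 = j ∧ ((a.2 : ℕ) : ℤ) ≤ t ∧
    ((b.2 : ℕ) : ℤ) = ((a.2 : ℕ) : ℤ) + ((lam j : ℤ) - 1 - t)

instance (i j : Fin n) (t : ℤ) (a b : Box lam) : Decidable (ZetaRel lam i j t a b) :=
  inferInstanceAs (Decidable (_ ∧ _))

/-- The `gl(V)`-part `Σ_{u ≤ t} e_{i,u}^{j,u+t'}` of `ζ_i^{j,t}`. -/
noncomputable def zetaE (lam : Fin n → ℕ) (i j : Fin n) (t : ℤ) : Matrix (Box lam) (Box lam) ℂ :=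
  ∑ a : Box lam, ∑ b : Box lam, if ZetaRel lam i j t a b then eMat a b else 0

lemma zetaZ_eq_zetaE_add_sigmaM (pr : Fin n → Fin n) (ε : ℂ) (π : Box lam ≃ Box lam)
    (i j : Fin n) (t : ℤ) :
    zetaZ pr ε π i j t = zetaE lam i j t + sigmaM pr ε π (zetaE lam i j t) := by
  let σ : Matrix (Box lam) (Box lam) ℂ →+ Matrix (Box lam) (Box lam) ℂ :=
    { toFun := sigmaM pr ε π
      map_zero' := by simp [sigmaM]
      map_add' := fun X Y => by
        simp only [sigmaM, transpose_add, Matrix.mul_add, Matrix.add_mul, neg_add] }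
  change _ = _ + σ _
  simp only [zetaE, map_sum, apply_ite σ, map_zero, ← Finset.sum_add_distrib, ite_add_ite,
    add_zero]
  rfl

lemma zetaE_apply (i j : Fin n) (t : ℤ) (p q : Box lam) :
    zetaE lam i j t p q = if ZetaRel lam i j t q p then 1 else 0 := by
  simp only [zetaE, eMat, Matrix.sum_apply, single_apply, Matrix.zero_apply,
    apply_ite (fun M : Matrix _ _ ℂ => M p q)]
  rw [Fintype.sum_eq_single q fun a ha => Finset.sum_eq_zero fun b _ => by simp [ha],
    Fintype.sum_eq_single p fun b hb => by simp [hb]]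
  simp

variable {i j k : Fin n} {s t : ℤ}

lemma ZetaRel.comp {a r b : Box lam} (h₁ : ZetaRel lam i k s a r) (h₂ : ZetaRel lam k j t r b) :
    ZetaRel lam i j (s + t - (lam k - 1)) a b := by
  obtain ⟨hai, -, has, hr⟩ := h₁
  obtain ⟨-, hbj, hrt, hb⟩ := h₂
  exact ⟨hai, hbj, by omega, by omega⟩

lemma ZetaRel.unique {a r r' : Box lam} (h : ZetaRel lam i k s a r)
    (h' : ZetaRel lam i k s a r') : r = r' := by
  obtain ⟨-, hrk, -, hr⟩ := h
  obtain ⟨-, hrk', -, hr'⟩ := h'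
  have hfst : r.1 = r'.1 := hrk.trans hrk'.symm
  exact Sigma.ext hfst ((Fin.heq_ext_iff (congrArg lam hfst)).mpr (by omega))

lemma ZetaRel.exists_mid (hs : s ≤ lam k - 1) (ht : t ≤ lam k - 1) {a b : Box lam}
    (h : ZetaRel lam i j (s + t - (lam k - 1)) a b) :
    ∃ r, ZetaRel lam i k s a r ∧ ZetaRel lam k j t r b := by
  obtain ⟨hai, hbj, ha, hb⟩ := h
  obtain ⟨u, hu⟩ : ∃ u : ℕ, (u : ℤ) = (a.2 : ℕ) + (lam k - 1 - s) :=
    ⟨((a.2 : ℕ) + (lam k - 1 - s)).toNat, Int.toNat_of_nonneg (by omega)⟩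
  exact ⟨⟨k, u, by omega⟩, ⟨hai, rfl, by omega, hu⟩,
    ⟨rfl, hbj, by simp only; omega, by simp only; omega⟩⟩

lemma zetaE_mul_zetaE (hs : s ≤ lam k - 1) (ht : t ≤ lam k - 1) :
    zetaE lam k j t * zetaE lam i k s = zetaE lam i j (s + t - (lam k - 1)) := by
  ext p q
  simp only [mul_apply, zetaE_apply, mul_ite, mul_one, mul_zero, ← ite_and]
  by_cases h : ZetaRel lam i j (s + t - (lam k - 1)) q p
  · obtain ⟨r, h₁, h₂⟩ := h.exists_mid hs ht
    rw [Fintype.sum_eq_single r fun r' hr' => if_neg fun h' => hr' (h'.1.unique h₁)]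
    simp [h, h₁, h₂]
  · rw [if_neg h]
    exact Finset.sum_eq_zero fun r _ => if_neg fun h' => h (h'.1.comp h'.2)

lemma levelProj_mul_zetaE_mul_levelProj (i j : Fin n) (t : ℤ) :
    levelProj (fun a : Box lam => lam a.1) (lam j) * zetaE lam i j t *
      levelProj (fun a : Box lam => lam a.1) (lam i) = zetaE lam i j t := by
  ext p q
  simp only [levelProj, mul_diagonal, diagonal_mul, zetaE_apply]
  by_cases h : ZetaRel lam i j t q p
  · simp [h, h.1, h.2.1]
  · simp [h]

end Zeta

theorem zeta_bracket_zeta_general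
    (n : ℕ) (lam : Fin n → ℕ)
    (ε : ℂ) (hε : ε = 1 ∨ ε = -1)
    (pr : Fin n → Fin n)
    (hlampr : ∀ i, lam (pr i) = lam i)
    (π : Box lam ≃ Box lam)
    (hπ1 : ∀ a : Box lam, (π a).1 = pr a.1)
    (i j k : Fin n) (hik : lam i < lam k) (hkj : lam k < lam j)
    (s t : ℕ) (hs : s < lam i) (ht : t < lam k) :
    ⁅zetaZ pr ε π i k (s : ℤ), zetaZ pr ε π k j (t : ℤ)⁆ =
      -zetaZ pr ε π i j ((s : ℤ) + t - ((lam k : ℤ) - 1)) := by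
  have hJ : IsUnit (Jmat pr ε π).det :=
    isUnit_det_Jmat pr ε π (by rcases hε with rfl | rfl <;> norm_num)
  have hJP := Jmat_commute_levelProj pr ε π fun a => by rw [hπ1, hlampr]
  simp only [zetaZ_eq_zetaE_add_sigmaM]
  rw [← zetaE_mul_zetaE (k := k) (by omega) (by omega)]
  exact lie_add_sigmaM_of_levelProj hJ hJP hik.ne hkj.ne (hik.trans hkj).ne
    (levelProj_mul_zetaE_mul_levelProj i k s) (levelProj_mul_zetaE_mul_levelProj k j t)

/-- For `λ_i < λ_k < λ_j`, `0 ≤ s < λ_i`, `0 ≤ t < λ_k`: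
`[ζ_i^{k,s}, ζ_k^{j,t}] = −ζ_i^{j, s + t − (λ_k − 1)}`. -/
theorem zeta_bracket_zeta
    (n : ℕ) (lam : Fin n → ℕ) (hlam : Antitone lam) (hpos : ∀ i, 0 < lam i)
    (ε : ℂ) (hε : ε = 1 ∨ ε = -1)
    (pr : Fin n → Fin n) (hpr : ∀ i, pr (pr i) = i)
    (hlampr : ∀ i, lam (pr i) = lam i)
    (hfix : ∀ i, pr i = i ↔ ε * (-1 : ℂ) ^ (lam i) = -1)
    (π : Box lam ≃ Box lam)
    (hπ1 : ∀ a : Box lam, (π a).1 = pr a.1)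
    (hπ2 : ∀ a : Box lam, ((π a).2 : ℕ) = lam a.1 - 1 - (a.2 : ℕ))
    (i j k : Fin n) (hik : lam i < lam k) (hkj : lam k < lam j)
    (s t : ℕ) (hs : s < lam i) (ht : t < lam k) :
    ⁅zetaZ pr ε π i k (s : ℤ), zetaZ pr ε π k j (t : ℤ)⁆ =
      -zetaZ pr ε π i j ((s : ℤ) + t - ((lam k : ℤ) - 1)) :=
  zeta_bracket_zeta_general n lam ε hε pr hlampr π hπ1 i j k hik hkj s t hs ht
end

section
/- For a ∈ {1,...,N} with col(a) = λ₁ (last column), and rows i,j with j ≠ row(a): the variable Ȳ_{b,a} (for any b) does not appear in any monomial of any coefficient of the (i,j) entry of the explicit expansion of L(z); dually, if col(a) = 1 and i ≠ row(a), then Ȳ_{a,b} does not appear in any monomial of the (i,j) entry. Concretely: in the sum over sequences a₁,...,a_s, d₁,...,d_s satisfying (row(d₁)=i, row(a_s)=j, col(d_m) > 1 for m > 1, col(a_m) < λ₁ for m < s, col(d_m) ≤ col(a_m)+1/2, row(d_{m+1}) = row(a_m), col(a_m) < col(d_{m+1}) when λ_{row(a_m)} = λ₁ and col(a_m) ≥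 col(d_{m+1}) when λ_{row(a_m)} < λ₁), no index d_m equals a when col(a)=1 and row(a) ≠ i, and no index a_m equals a when col(a)=λ₁ and row(a) ≠ j. -/
/-- Twice the column label of a box: `2·col⟨i,s⟩ = λ₁ − λᵢ + 2 + 2s`, `l1 = λ₁`. -/
def tcol {n : ℕ} (lam : Fin n → ℕ) (l1 : ℕ) (a : Box lam) : ℤ :=
  (l1 : ℤ) - lam a.1 + 2 + 2 * (a.2 : ℕ)

theorem ne_of_tcol_eq_two {n : ℕ} {lam : Fin n → ℕ} {l1 s : ℕ} (hs : 0 < s)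
    (D : Fin s → Box lam) {i : Fin n} (hfirst : (D ⟨0, hs⟩).1 = i)
    (hrest : ∀ m : Fin s, (m : ℕ) ≠ 0 → 2 < tcol lam l1 (D m))
    {a0 : Box lam} (hcol : tcol lam l1 a0 = 2) (hne : a0.1 ≠ i) (m : Fin s) : D m ≠ a0 := by
  rintro rfl
  by_cases hm : (m : ℕ) = 0
  · obtain rfl : m = ⟨0, hs⟩ := Fin.ext hm
    exact hne hfirst
  · exact (hrest m hm).ne' hcol

theorem ne_of_tcol_eq_two_mul {n : ℕ} {lam : Fin n → ℕ} {l1 s : ℕ} (hs : 0 < s)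
    (A : Fin s → Box lam) {j : Fin n} (hlast_row : (A ⟨s - 1, by omega⟩).1 = j)
    (hinit : ∀ m : Fin s, (m : ℕ) < s - 1 → tcol lam l1 (A m) < 2 * l1)
    {a0 : Box lam} (hcol : tcol lam l1 a0 = 2 * l1) (hne : a0.1 ≠ j) (m : Fin s) :
    A m ≠ a0 := by
  rintro rfl
  by_cases hm : (m : ℕ) < s - 1
  · exact (hinit m hm).ne hcol
  · have hlast : m = ⟨s - 1, by omega⟩ := Fin.ext (show (m : ℕ) = s - 1 by omega)
    rw [hlast] at hne
    exact hne hlast_row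

/-- Lemmas `L:aanotappear` / `L:aanotappear2` (combinatorial core): in the explicit
expansion of `L(z)_{i,j}`, the monomials `Ȳ_{d₁,a₁}···Ȳ_{d_s,a_s}` range over sequences
satisfying: `row(d₁) = i`, `row(a_s) = j`, `col(d_m) > 1` for `m > 1`,
`col(a_m) < λ₁` for `m < s`, `col(d_m) ≤ col(a_m) + 1/2` for all `m`,
`row(d_{m+1}) = row(a_m)`, and `col(a_m) < col(d_{m+1})` when `λ_{row(a_m)} = λ₁`,
`col(a_m) ≥ col(d_{m+1})` when `λ_{row(a_m)} < λ₁`.  If `a₀` is a box in the first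
column (`col(a₀) = 1`) with `row(a₀) ≠ i`, then no `d_m` equals `a₀`; if `a₀` is in the
last column (`col(a₀) = λ₁`) with `row(a₀) ≠ j`, then no `a_m` equals `a₀`. -/
theorem forbidden_indices_in_L_expansion
    (n : ℕ) (lam : Fin n → ℕ)
    (l1 : ℕ)
    (i j : Fin n)
    (s : ℕ) (hs : 0 < s)
    (A D : Fin s → Box lam)
    (h1 : (D ⟨0, hs⟩).1 = i)
    (h2 : (A ⟨s - 1, by omega⟩).1 = j)
    (h3 : ∀ m : Fin s, (m : ℕ) ≠ 0 → 2 < tcol lam l1 (D m))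
    (h4 : ∀ m : Fin s, (m : ℕ) < s - 1 → tcol lam l1 (A m) < 2 * l1)
    (a0 : Box lam) :
    (tcol lam l1 a0 = 2 → a0.1 ≠ i → ∀ m : Fin s, D m ≠ a0) ∧
    (tcol lam l1 a0 = 2 * l1 → a0.1 ≠ j → ∀ m : Fin s, A m ≠ a0) :=
  ⟨fun hcol hne => ne_of_tcol_eq_two hs D h1 h3 hcol hne,
    fun hcol hne => ne_of_tcol_eq_two_mul hs A h2 h4 hcol hne⟩
end
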